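/- Define J_lib(ℰ) := (√2/π) ∫_{φ=−arccos(−ℰ)}^{arccos(−ℰ)} √(cos φ + ℰ) dφ for −1 < ℰ < 1. Then at every ℰ ∈ (−1,1) the function J_lib is differentiable with derivative J_lib'(ℰ) = (2/π) · K((1+ℰ)/2). -/

import Mathlib

open MeasureTheory Real

/-- The complete elliptic integral of the first kind,
`K(m) = ∫₀¹ ds/(√(1−s²)·√(1−m s²))`. -/
noncomputable def ellipticK (m : ℝ) : ℝ :=
  ∫ s in (0 : ℝ)..1, 1 / (Real.sqrt (1 - s ^ 2) * Real.sqrt (1 - m * s ^ 2))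

/-- The Whitham modulation quantity for superluminal librational wavetrains,
`J_lib(ℰ) = (√2/π) ∫_{−arccos(−ℰ)}^{arccos(−ℰ)} √(cos φ + ℰ) dφ`, for `−1 < ℰ < 1`. -/
noncomputable def J_lib (E : ℝ) : ℝ :=
  (Real.sqrt 2 / Real.pi) *
    ∫ φ in (-(Real.arccos (-E)))..(Real.arccos (-E)), Real.sqrt (Real.cos φ + E)

/-!
With `m = (1 + ℰ)/2`, the substitution `φ = 2 arcsin (√m s)` turns `cos φ + ℰ` into
`2m (1 - s²)` and the moving endpoints `±arccos (-ℰ)` into `±1`, so that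
`J_lib ℰ = (4/π) G(m)` with `G = librationIntegral`. The `m`-derivative of its
integrand is bounded near any `m < 1`, so `G` may be differentiated under the integral
sign; the resulting integrand differs from that of `K(m)` by the `s`-derivative of
`s √(1 - s²) / √(1 - m s²)`, which vanishes at `s = 0` and `s = 1`. Hence `G' = K`.
-/

open Set intervalIntegral Filter Topology

lemma one_sub_mul_sq_pos {m s : ℝ} (hm : m < 1) (hs : s ∈ Icc (0 : ℝ) 1) :
    0 < 1 - m * s ^ 2 := by
  have hs2 : s ^ 2 ≤ 1 := pow_le_one₀ hs.1 hs.2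
  rcases le_total 0 m with h | h
  · nlinarith [mul_le_of_le_one_right h hs2]
  · nlinarith [sq_nonneg s]

lemma sqrt_one_sub_mul_sq_ne_zero {m s : ℝ} (hm : m < 1) (hs : s ∈ Icc (0 : ℝ) 1) :
    √(1 - m * s ^ 2) ≠ 0 :=
  (sqrt_pos.2 (one_sub_mul_sq_pos hm hs)).ne'

lemma intervalIntegrable_ellipticK_integrand {m : ℝ} (hm : m < 1) :
    IntervalIntegrable (fun s => 1 / (√(1 - s ^ 2) * √(1 - m * s ^ 2))) volume 0 1 := by
  have hinvSqrt : IntervalIntegrable (fun s => 1 / √(1 - s ^ 2)) volume 0 1 := by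
    refine intervalIntegrable_deriv_of_nonneg continuous_arcsin.continuousOn (fun s hs => ?_)
      (fun s _ => by positivity)
    rw [min_eq_left zero_le_one, max_eq_right zero_le_one] at hs
    exact hasDerivAt_arcsin (by linarith [hs.1]) (by linarith [hs.2])
  have hcont : ContinuousOn (fun s => 1 / √(1 - m * s ^ 2)) (uIcc 0 1) := by
    rw [uIcc_of_le zero_le_one]
    exact continuousOn_const.div (by fun_prop) fun s hs => sqrt_one_sub_mul_sq_ne_zero hm hs
  simpa only [one_div_mul_one_div] using hinvSqrt.mul_continuousOn hcont

noncomputable def librationIntegrand (m s : ℝ) : ℝ :=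
  2 * m * √(1 - s ^ 2) / √(1 - m * s ^ 2)

noncomputable def librationIntegrand' (m s : ℝ) : ℝ :=
  2 * √(1 - s ^ 2) / √(1 - m * s ^ 2) + m * s ^ 2 * √(1 - s ^ 2) / √(1 - m * s ^ 2) ^ 3

noncomputable def librationIntegral (m : ℝ) : ℝ :=
  ∫ s in (0 : ℝ)..1, librationIntegrand m s

lemma measurable_librationIntegrand (m : ℝ) : Measurable (librationIntegrand m) := by
  unfold librationIntegrand; fun_prop

lemma measurable_librationIntegrand' (m : ℝ) : Measurable (librationIntegrand' m) := by
  unfold librationIntegrand'; fun_prop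

lemma continuousOn_librationIntegrand {m : ℝ} (hm : m < 1) :
    ContinuousOn (librationIntegrand m) (Icc 0 1) :=
  (Continuous.continuousOn (by fun_prop)).div (Continuous.continuousOn (by fun_prop))
    fun _ hs => sqrt_one_sub_mul_sq_ne_zero hm hs

lemma continuousOn_librationIntegrand' :
    ContinuousOn (fun p : ℝ × ℝ => librationIntegrand' p.1 p.2) (Iio 1 ×ˢ Icc 0 1) := by
  have hne : ∀ p ∈ Iio (1 : ℝ) ×ˢ Icc (0 : ℝ) 1, √(1 - p.1 * p.2 ^ 2) ≠ 0 :=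
    fun p hp => sqrt_one_sub_mul_sq_ne_zero hp.1 hp.2
  exact ((Continuous.continuousOn (by fun_prop)).div (Continuous.continuousOn (by fun_prop))
    hne).add ((Continuous.continuousOn (by fun_prop)).div (Continuous.continuousOn (by fun_prop))
    fun p hp => pow_ne_zero 3 (hne p hp))

lemma hasDerivAt_librationIntegrand {m s : ℝ} (hm : m < 1) (hs : s ∈ Icc (0 : ℝ) 1) :
    HasDerivAt (librationIntegrand · s) (librationIntegrand' m s) m := by
  have hpos := one_sub_mul_sq_pos hm hs
  have hu : HasDerivAt (fun x => √(1 - x * s ^ 2)) (1 / (2 * √(1 - m * s ^ 2)) * -s ^ 2) m :=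
    (hasDerivAt_sqrt hpos.ne').comp m
      (by simpa using ((hasDerivAt_id m).mul_const (s ^ 2)).const_sub 1)
  have hnum : HasDerivAt (fun x => 2 * x * √(1 - s ^ 2)) (2 * √(1 - s ^ 2)) m := by
    simpa using ((hasDerivAt_id m).const_mul 2).mul_const √(1 - s ^ 2)
  refine (hnum.div hu (sqrt_pos.2 hpos).ne').congr_deriv ?_
  unfold librationIntegrand'
  field_simp
  ring

lemma hasDerivAt_mul_sqrt_one_sub_sq_div {m s : ℝ} (hm : m < 1) (hs : s ∈ Ioo (0 : ℝ) 1) :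
    HasDerivAt (fun t => t * √(1 - t ^ 2) / √(1 - m * t ^ 2))
      (librationIntegrand' m s - 1 / (√(1 - s ^ 2) * √(1 - m * s ^ 2))) s := by
  have hpos := one_sub_mul_sq_pos hm (Ioo_subset_Icc_self hs)
  have hpos' : 0 < 1 - s ^ 2 := by nlinarith [hs.1, hs.2]
  have hc : HasDerivAt (fun t => √(1 - t ^ 2)) (1 / (2 * √(1 - s ^ 2)) * -(2 * s)) s :=
    (hasDerivAt_sqrt hpos'.ne').comp s (by simpa using (hasDerivAt_pow 2 s).const_sub 1)
  have hu : HasDerivAt (fun t => √(1 - m * t ^ 2))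
      (1 / (2 * √(1 - m * s ^ 2)) * -(m * (2 * s))) s :=
    (hasDerivAt_sqrt hpos.ne').comp s
      (by simpa using ((hasDerivAt_pow 2 s).const_mul m).const_sub 1)
  refine (((hasDerivAt_id' s).mul hc).div hu (sqrt_pos.2 hpos).ne').congr_deriv ?_
  have hc2 : √(1 - s ^ 2) ^ 2 = 1 - s ^ 2 := sq_sqrt hpos'.le
  have hu2 : √(1 - m * s ^ 2) ^ 2 = 1 - m * s ^ 2 := sq_sqrt hpos.le
  have hc0 := (sqrt_pos.2 hpos').ne'
  have hu0 := (sqrt_pos.2 hpos).ne'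
  simp only [librationIntegrand', Pi.mul_apply]
  generalize √(1 - s ^ 2) = c at *
  generalize √(1 - m * s ^ 2) = u at *
  field_simp
  linear_combination -u ^ 2 * hc2

lemma integral_librationIntegrand'_eq_ellipticK {m : ℝ} (hm : m < 1) :
    ∫ s in (0 : ℝ)..1, librationIntegrand' m s = ellipticK m := by
  have hK := intervalIntegrable_ellipticK_integrand hm
  have hint : IntervalIntegrable (librationIntegrand' m) volume 0 1 := by
    refine ContinuousOn.intervalIntegrable ?_
    rw [uIcc_of_le zero_le_one]
    exact continuousOn_librationIntegrand'.comp (f := fun s : ℝ => (m, s)) (by fun_prop)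
      fun s hs => ⟨hm, hs⟩
  have hprim : ContinuousOn (fun t => t * √(1 - t ^ 2) / √(1 - m * t ^ 2)) (Icc 0 1) :=
    (Continuous.continuousOn (by fun_prop)).div (Continuous.continuousOn (by fun_prop))
      fun _ hs => sqrt_one_sub_mul_sq_ne_zero hm hs
  have hexact : ∫ s in (0 : ℝ)..1,
      (librationIntegrand' m s - 1 / (√(1 - s ^ 2) * √(1 - m * s ^ 2))) = 0 := by
    rw [integral_eq_sub_of_hasDerivAt_of_le zero_le_one hprim
      (fun s hs => hasDerivAt_mul_sqrt_one_sub_sq_div hm hs) (hint.sub hK)]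
    norm_num
  rw [integral_sub hint hK, sub_eq_zero] at hexact
  exact hexact

theorem hasDerivAt_librationIntegral {m : ℝ} (hm : m < 1) :
    HasDerivAt librationIntegral (ellipticK m) m := by
  obtain ⟨ε, hε, hball⟩ : ∃ ε > 0, Metric.closedBall m ε ⊆ Iio 1 := by
    refine ⟨(1 - m) / 2, by linarith, fun x hx => ?_⟩
    rw [Metric.mem_closedBall, Real.dist_eq, abs_le] at hx
    exact mem_Iio.2 (by linarith [hx.2])
  have hIoc : uIoc (0 : ℝ) 1 ⊆ Icc 0 1 := by rw [uIoc_of_le zero_le_one]; exact Ioc_subset_Icc_self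
  obtain ⟨C, hC⟩ := ((isCompact_closedBall m ε).prod isCompact_Icc).exists_bound_of_continuousOn
    (continuousOn_librationIntegrand'.mono (prod_mono hball subset_rfl))
  have h := hasDerivAt_integral_of_dominated_loc_of_deriv_le (μ := volume) (bound := fun _ => C)
    (Metric.ball_mem_nhds m hε)
    (Eventually.of_forall fun x => (measurable_librationIntegrand x).aestronglyMeasurable)
    ((continuousOn_librationIntegrand hm).intervalIntegrable_of_Icc zero_le_one)
    (measurable_librationIntegrand' m).aestronglyMeasurable
    (ae_of_all _ fun s hs x hx => hC (x, s) ⟨Metric.ball_subset_closedBall hx, hIoc hs⟩)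
    intervalIntegrable_const
    (ae_of_all _ fun s hs x hx =>
      hasDerivAt_librationIntegrand (hball (Metric.ball_subset_closedBall hx)) (hIoc hs))
  rw [← integral_librationIntegrand'_eq_ellipticK hm]
  exact h.2

lemma cos_two_mul_arcsin {x : ℝ} (hx₁ : -1 ≤ x) (hx₂ : x ≤ 1) :
    cos (2 * arcsin x) = 1 - 2 * x ^ 2 := by
  rw [cos_two_mul_eq_one_sub, sin_arcsin hx₁ hx₂]

lemma arccos_one_sub_two_mul {m : ℝ} (hm₀ : 0 ≤ m) (hm₁ : m ≤ 1) :
    arccos (1 - 2 * m) = 2 * arcsin √m := by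
  have hcos := cos_two_mul_arcsin (by linarith [sqrt_nonneg m]) (sqrt_le_one.2 hm₁)
  rw [sq_sqrt hm₀] at hcos
  rw [← hcos, arccos_cos (by linarith [arcsin_nonneg.2 (sqrt_nonneg m)])
    (by linarith [arcsin_le_pi_div_two √m])]

lemma integral_neg_eq_two_mul_of_even {g : ℝ → ℝ} {a : ℝ} (heven : ∀ x, g (-x) = g x)
    (hg : IntervalIntegrable g volume 0 a) :
    ∫ x in -a..a, g x = 2 * ∫ x in 0..a, g x := by
  have hneg : ∫ x in -a..0, g x = ∫ x in 0..a, g x := by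
    simpa only [heven, neg_zero] using (integral_comp_neg (a := 0) (b := a) g).symm
  have hg' : IntervalIntegrable g volume (-a) 0 := by
    simpa only [heven, neg_zero] using ((IntervalIntegrable.iff_comp_neg (by simp)).1 hg).symm
  rw [← integral_add_adjacent_intervals hg' hg, hneg, two_mul]

lemma integral_sqrt_cos_add_eq {m : ℝ} (hm₀ : 0 ≤ m) (hm₁ : m < 1) :
    ∫ φ in (0 : ℝ)..2 * arcsin √m, √(cos φ + (2 * m - 1)) = √2 * librationIntegral m := by
  have hsm : √m < 1 := (sqrt_lt' one_pos).2 (by simpa using hm₁)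
  have hmem : ∀ s ∈ uIcc (0 : ℝ) 1, -1 < √m * s ∧ √m * s < 1 := fun s hs => by
    rw [uIcc_of_le zero_le_one] at hs
    constructor <;> nlinarith [sqrt_nonneg m, hsm, hs.1, hs.2]
  have hderiv : ∀ s ∈ uIcc (0 : ℝ) 1, HasDerivAt (fun t => 2 * arcsin (√m * t))
      (2 * √m / √(1 - m * s ^ 2)) s := fun s hs => by
    have h := ((hasDerivAt_arcsin (hmem s hs).1.ne' (hmem s hs).2.ne).comp s
      ((hasDerivAt_id' s).const_mul √m)).const_mul 2
    rw [mul_pow, sq_sqrt hm₀] at h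
    exact h.congr_deriv (by ring)
  have hcont : ContinuousOn (fun s => 2 * √m / √(1 - m * s ^ 2)) (uIcc 0 1) := by
    rw [uIcc_of_le zero_le_one]
    exact continuousOn_const.div (by fun_prop) fun s hs => sqrt_one_sub_mul_sq_ne_zero hm₁ hs
  have hsubst := integral_comp_mul_deriv hderiv hcont (g := fun φ => √(cos φ + (2 * m - 1)))
    (by fun_prop)
  simp only [mul_zero, arcsin_zero, mul_one, Function.comp] at hsubst
  rw [← hsubst, librationIntegral, ← intervalIntegral.integral_const_mul]
  refine integral_congr fun s hs => ?_
  have hs' : s ∈ Icc (0 : ℝ) 1 := by rwa [uIcc_of_le zero_le_one] at hs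
  have hcos : cos (2 * arcsin (√m * s)) + (2 * m - 1) = 2 * m * (1 - s ^ 2) := by
    rw [cos_two_mul_arcsin (hmem s hs).1.le (hmem s hs).2.le, mul_pow, sq_sqrt hm₀]
    ring
  have hsq : √(2 * m * (1 - s ^ 2)) = √2 * √m * √(1 - s ^ 2) := by
    rw [sqrt_mul (by positivity), sqrt_mul (by norm_num)]
  simp only [hcos, hsq, librationIntegrand]
  calc √2 * √m * √(1 - s ^ 2) * (2 * √m / √(1 - m * s ^ 2))
      = √2 * (2 * (√m * √m) * √(1 - s ^ 2) / √(1 - m * s ^ 2)) := by ring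
    _ = _ := by rw [mul_self_sqrt hm₀]

lemma J_lib_eq_librationIntegral {E : ℝ} (hE₁ : -1 ≤ E) (hE₂ : E < 1) :
    J_lib E = 4 / π * librationIntegral ((1 + E) / 2) := by
  obtain ⟨m, rfl⟩ : ∃ m, E = 2 * m - 1 := ⟨(1 + E) / 2, by ring⟩
  have hm₀ : 0 ≤ m := by linarith
  have hm₁ : m < 1 := by linarith
  rw [J_lib, show -(2 * m - 1) = 1 - 2 * m by ring, arccos_one_sub_two_mul hm₀ hm₁.le,
    integral_neg_eq_two_mul_of_even (fun φ => by rw [cos_neg])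
      (Continuous.intervalIntegrable (by fun_prop) _ _),
    integral_sqrt_cos_add_eq hm₀ hm₁, show (1 + (2 * m - 1)) / 2 = m by ring]
  calc √2 / π * (2 * (√2 * librationIntegral m)) = (√2 * √2) * 2 / π * librationIntegral m := by
        ring
    _ = _ := by rw [mul_self_sqrt zero_le_two]; ring

/-- **Derivative of the librational averaged integral.** For every `ℰ ∈ (−1,1)`, `J_lib` is
differentiable at `ℰ` with `J_lib'(ℰ) = (2/π) K((1+ℰ)/2)`. -/
theorem J_lib_hasDerivAt (E : ℝ) (hE₁ : -1 < E) (hE₂ : E < 1) :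
    HasDerivAt J_lib ((2 / Real.pi) * ellipticK ((1 + E) / 2)) E := by
  have hJ : J_lib =ᶠ[𝓝 E] fun x => 4 / π * librationIntegral ((1 + x) / 2) :=
    eventually_of_mem (Ioo_mem_nhds hE₁ hE₂) fun x hx => J_lib_eq_librationIntegral hx.1.le hx.2
  have hm : HasDerivAt (fun x : ℝ => (1 + x) / 2) (1 / 2) E := by
    simpa using ((hasDerivAt_id E).const_add 1).div_const 2
  have hK := (hasDerivAt_librationIntegral (by linarith : (1 + E) / 2 < 1)).comp E hm
  refine ((hK.const_mul (4 / π)).congr_of_eventuallyEq hJ).congr_deriv ?_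
  ring
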